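/- arXiv:1407.7483 — 2 statements merged into one kernel-verified Lean document; each statement's English description precedes it below -/
import Mathlib

section
/- Let S be an ordered semigroup and X a nonempty subset of S. Then the set Q := (X ∪ ((XS] ∩ (SX])] is the quasi-ideal of S generated by X; that is, Q is a quasi-ideal of S, X ⊆ Q, and for every quasi-ideal T of S with X ⊆ T one has Q ⊆ T. -/
/-!
Since `(XS] ∩ (SX] ⊆ (XS]`, every element of `Q` lies below an element of `X ∪ XS`, so
`(QS] ⊆ (XS]` by associativity and compatibility of the order; symmetrically `(SQ] ⊆ (SX]`.
Hence `(QS] ∩ (SQ] ⊆ (XS] ∩ (SX] ⊆ Q`. Conversely a quasi-ideal `T ⊇ X` contains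
`(XS] ∩ (SX] ⊆ (TS] ∩ (ST]`, and being downward closed it contains `Q`.
-/

open Pointwise

/-- The "downward closure" `(A] = {t | t ≤ a for some a ∈ A}`. -/
def dcl {S : Type*} [LE S] (A : Set S) : Set S := {t | ∃ a ∈ A, t ≤ a}

open Set

def IsQuasiIdeal {S : Type*} [Mul S] [LE S] (T : Set S) : Prop :=
  T.Nonempty ∧ dcl (T * univ) ∩ dcl (univ * T) ⊆ T ∧ dcl T ⊆ T

section Closure

variable {S : Type*}

theorem dcl_mono [LE S] {A B : Set S} (h : A ⊆ B) : dcl A ⊆ dcl B :=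
  fun _ ⟨a, ha, hta⟩ => ⟨a, h ha, hta⟩

theorem dcl_subset_of_subset [LE S] {A T : Set S} (hAT : A ⊆ T) (hT : dcl T ⊆ T) : dcl A ⊆ T :=
  (dcl_mono hAT).trans hT

variable [Preorder S]

theorem subset_dcl (A : Set S) : A ⊆ dcl A :=
  fun a ha => ⟨a, ha, le_rfl⟩

theorem dcl_dcl (A : Set S) : dcl (dcl A) = dcl A :=
  (subset_dcl _).antisymm' fun _ ⟨_, ⟨b, hb, hab⟩, hta⟩ => ⟨b, hb, hta.trans hab⟩

theorem dcl_subset_dcl_of_subset_dcl {A B : Set S} (h : A ⊆ dcl B) : dcl A ⊆ dcl B :=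
  dcl_subset_of_subset h (dcl_dcl B).subset

end Closure

section OrderedSemigroup

variable {S : Type*} [Preorder S]

theorem dcl_mul_subset [Mul S] [MulRightMono S] (A B : Set S) : dcl A * B ⊆ dcl (A * B) := by
  rintro _ ⟨t, ⟨a, ha, hta⟩, b, hb, rfl⟩
  exact ⟨a * b, mul_mem_mul ha hb, mul_le_mul_left hta b⟩

theorem mul_dcl_subset [Mul S] [MulLeftMono S] (A B : Set S) : A * dcl B ⊆ dcl (A * B) := by
  rintro _ ⟨a, ha, t, ⟨b, hb, htb⟩, rfl⟩
  exact ⟨a * b, mul_mem_mul ha hb, mul_le_mul_right htb a⟩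

variable [Semigroup S]

theorem dcl_mul_univ_subset_of_subset [MulRightMono S] {A B : Set S}
    (h : B ⊆ dcl (A ∪ A * univ)) : dcl (B * univ) ⊆ dcl (A * univ) := by
  have hAA : A * univ * univ ⊆ A * univ := by
    rw [mul_assoc]
    exact mul_subset_mul_left (subset_univ _)
  calc dcl (B * univ) ⊆ dcl (dcl (A ∪ A * univ) * univ) := dcl_mono (mul_subset_mul_right h)
    _ ⊆ dcl ((A ∪ A * univ) * univ) :=
      dcl_subset_dcl_of_subset_dcl (dcl_mul_subset _ _)
    _ ⊆ dcl (A * univ) := dcl_mono (by rw [union_mul]; exact union_subset subset_rfl hAA)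

theorem dcl_univ_mul_subset_of_subset [MulLeftMono S] {A B : Set S}
    (h : B ⊆ dcl (A ∪ univ * A)) : dcl (univ * B) ⊆ dcl (univ * A) := by
  have hAA : univ * (univ * A) ⊆ univ * A := by
    rw [← mul_assoc]
    exact mul_subset_mul_right (subset_univ _)
  calc dcl (univ * B) ⊆ dcl (univ * dcl (A ∪ univ * A)) := dcl_mono (mul_subset_mul_left h)
    _ ⊆ dcl (univ * (A ∪ univ * A)) :=
      dcl_subset_dcl_of_subset_dcl (mul_dcl_subset _ _)
    _ ⊆ dcl (univ * A) := dcl_mono (by rw [mul_union]; exact union_subset subset_rfl hAA)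

variable [MulLeftMono S] [MulRightMono S]

theorem isQuasiIdeal_dcl_union_inter {X : Set S} (hX : X.Nonempty) :
    IsQuasiIdeal (dcl (X ∪ (dcl (X * univ) ∩ dcl (univ * X)))) := by
  have hQright : dcl (X ∪ (dcl (X * univ) ∩ dcl (univ * X))) ⊆ dcl (X ∪ X * univ) :=
    dcl_subset_dcl_of_subset_dcl (union_subset (subset_union_left.trans (subset_dcl _))
      (inter_subset_left.trans (dcl_mono subset_union_right)))
  have hQleft : dcl (X ∪ (dcl (X * univ) ∩ dcl (univ * X))) ⊆ dcl (X ∪ univ * X) :=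
    dcl_subset_dcl_of_subset_dcl (union_subset (subset_union_left.trans (subset_dcl _))
      (inter_subset_right.trans (dcl_mono subset_union_right)))
  refine ⟨hX.mono (subset_union_left.trans (subset_dcl _)), ?_, (dcl_dcl _).subset⟩
  exact (inter_subset_inter (dcl_mul_univ_subset_of_subset hQright)
    (dcl_univ_mul_subset_of_subset hQleft)).trans (subset_union_right.trans (subset_dcl _))

end OrderedSemigroup

theorem dcl_union_inter_subset {S : Type*} [Mul S] [LE S] {X T : Set S}
    (hTquasi : dcl (T * univ) ∩ dcl (univ * T) ⊆ T) (hTlower : dcl T ⊆ T) (hXT : X ⊆ T) :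
    dcl (X ∪ (dcl (X * univ) ∩ dcl (univ * X))) ⊆ T :=
  dcl_subset_of_subset
    (union_subset hXT
      ((inter_subset_inter (dcl_mono (mul_subset_mul_right hXT))
        (dcl_mono (mul_subset_mul_left hXT))).trans hTquasi))
    hTlower

/-- `Q = (X ∪ ((XS] ∩ (SX])]` is the quasi-ideal of S generated by X. -/
theorem Q_is_quasi_ideal_generated {S : Type*} [Semigroup S] [PartialOrder S]
    [CovariantClass S S (· * ·) (· ≤ ·)]
    [CovariantClass S S (Function.swap (· * ·)) (· ≤ ·)]
    (X : Set S) (hX : X.Nonempty) (Q : Set S)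
    (hQ : Q = dcl (X ∪ (dcl (X * Set.univ) ∩ dcl (Set.univ * X)))) :
    (Q.Nonempty ∧ dcl (Q * Set.univ) ∩ dcl (Set.univ * Q) ⊆ Q ∧ dcl Q ⊆ Q) ∧
    X ⊆ Q ∧
    (∀ T : Set S, T.Nonempty →
      dcl (T * Set.univ) ∩ dcl (Set.univ * T) ⊆ T → dcl T ⊆ T →
      X ⊆ T → Q ⊆ T) := by
  subst hQ
  exact ⟨isQuasiIdeal_dcl_union_inter hX, subset_union_left.trans (subset_dcl _),
    fun _ _ hTquasi hTlower hXT => dcl_union_inter_subset hTquasi hTlower hXT⟩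
end

section
/- Let S be an le-semigroup with greatest element e. The following are equivalent: (1) S is intra-regular (a ≤ ea²e for all a ∈ S); (2) for every right ideal element x, every left ideal element y, and every bi-ideal element b of S, x ∧ b ∧ y ≤ ybx; (3) for every right ideal element x, every left ideal element y, and every quasi-ideal element q of S, x ∧ q ∧ y ≤ yqx. -/
/-!
Intra-regularity gives `t ≤ (e t)(t e t)(t e)` for every `t`; for `t = x ⊓ b ⊓ y` the three
factors lie below `y`, `b` and `x`. Every quasi-ideal element is a bi-ideal element, so the
bi-ideal condition implies the quasi-ideal one. Conversely, apply the quasi-ideal condition to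
the right ideal element `R = a ⊔ a e` (also a quasi-ideal element) and the left ideal element
`L = a ⊔ e a`: then `a ≤ L R R ≤ L (a e) = a² e ⊔ e a² e`, and substituting this bound for the
middle `a` of `a² e` absorbs the first summand into `e a² e`.
-/

section Monotone

variable {S : Type*} [Mul S] [Lattice S]

theorem mulLeftMono_of_mul_sup (hld : ∀ a b c : S, a * (b ⊔ c) = a * b ⊔ a * c) :
    MulLeftMono S :=
  ⟨fun a b c hbc => by
    rw [← sup_eq_right.mpr hbc, hld]
    exact le_sup_left⟩

theorem mulRightMono_of_sup_mul (hrd : ∀ a b c : S, (a ⊔ b) * c = a * c ⊔ b * c) :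
    MulRightMono S :=
  ⟨fun c a b hab => by
    change a * c ≤ b * c
    rw [← sup_eq_right.mpr hab, hrd]
    exact le_sup_left⟩

end Monotone

namespace LeSemigroup

variable {S : Type*} [Semigroup S] [Lattice S] [MulLeftMono S] [MulRightMono S] {e : S}

theorem mul_sq_mul_le (he : ∀ a : S, a ≤ e) (p a s : S) : p * (a * a) * s ≤ e * (a * a) * e := by
  gcongr <;> exact he _

theorem le_mul_mul_mul_of_intraRegular (he : ∀ a : S, a ≤ e)
    (hi : ∀ a : S, a ≤ e * (a * a) * e) (t : S) : t ≤ e * t * (t * e * t) * (t * e) :=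
  calc t ≤ e * (t * t) * e := hi t
    _ ≤ e * ((e * (t * t) * e) * (e * (t * t) * e)) * e := by gcongr <;> exact hi t
    _ = (e * e) * t * (t * (e * e) * t) * (t * (e * e)) := by simp only [mul_assoc]
    _ ≤ e * t * (t * e * t) * (t * e) := by gcongr <;> exact he _

theorem inf_inf_le_mul_mul_of_intraRegular (he : ∀ a : S, a ≤ e)
    (hi : ∀ a : S, a ≤ e * (a * a) * e) (x y b : S) (hx : x * e ≤ x) (hy : e * y ≤ y)
    (hb : b * e * b ≤ b) : x ⊓ b ⊓ y ≤ y * b * x := by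
  set t := x ⊓ b ⊓ y
  have htx : t ≤ x := inf_le_left.trans inf_le_left
  have htb : t ≤ b := inf_le_left.trans inf_le_right
  have hty : t ≤ y := inf_le_right
  calc t ≤ e * t * (t * e * t) * (t * e) := le_mul_mul_mul_of_intraRegular he hi t
    _ ≤ (e * y) * (b * e * b) * (x * e) := by gcongr
    _ ≤ y * b * x := by gcongr

theorem mul_mul_le_of_mul_inf_mul_le (he : ∀ a : S, a ≤ e) {q : S} (hq : q * e ⊓ e * q ≤ q) :
    q * e * q ≤ q := by
  refine le_trans (le_inf ?_ ?_) hq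
  · calc q * e * q = q * (e * q) := mul_assoc _ _ _
      _ ≤ q * e := by gcongr; exact he _
  · calc q * e * q ≤ e * q := by gcongr; exact he _

theorem sup_mul_mul_le_mul (he : ∀ a : S, a ≤ e)
    (hrd : ∀ a b c : S, (a ⊔ b) * c = a * c ⊔ b * c) (a : S) : (a ⊔ a * e) * e ≤ a * e := by
  rw [hrd, mul_assoc]
  exact sup_le le_rfl (by gcongr; exact he _)

theorem mul_sup_mul_le_mul (he : ∀ a : S, a ≤ e)
    (hld : ∀ a b c : S, a * (b ⊔ c) = a * b ⊔ a * c) (a : S) : e * (a ⊔ e * a) ≤ e * a := by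
  rw [hld, ← mul_assoc]
  exact sup_le le_rfl (by gcongr; exact he _)

theorem le_sq_mul_sup_of_inf_inf_le (he : ∀ a : S, a ≤ e)
    (hld : ∀ a b c : S, a * (b ⊔ c) = a * b ⊔ a * c)
    (hrd : ∀ a b c : S, (a ⊔ b) * c = a * c ⊔ b * c)
    (hq : ∀ x y q : S, x * e ≤ x → e * y ≤ y → q * e ⊓ e * q ≤ q → x ⊓ q ⊓ y ≤ y * q * x)
    (a : S) : a ≤ a * a * e ⊔ e * (a * a) * e := by
  set R := a ⊔ a * e
  set L := a ⊔ e * a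
  have hRe : R * e ≤ a * e := sup_mul_mul_le_mul he hrd a
  have hR : R * e ≤ R := hRe.trans le_sup_right
  have hL : e * L ≤ L := (mul_sup_mul_le_mul he hld a).trans le_sup_right
  calc a ≤ R ⊓ R ⊓ L := le_inf (le_inf le_sup_left le_sup_left) le_sup_left
    _ ≤ L * R * R := hq R L R hR hL (inf_le_left.trans hR)
    _ ≤ L * (R * e) := by rw [mul_assoc]; gcongr; exact he _
    _ ≤ L * (a * e) := by gcongr
    _ = a * a * e ⊔ e * (a * a) * e := by rw [hrd]; simp only [mul_assoc]

theorem le_mul_sq_mul_of_le_sq_mul_sup (he : ∀ a : S, a ≤ e)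
    (hld : ∀ a b c : S, a * (b ⊔ c) = a * b ⊔ a * c)
    (hrd : ∀ a b c : S, (a ⊔ b) * c = a * c ⊔ b * c) {a : S}
    (ha : a ≤ a * a * e ⊔ e * (a * a) * e) : a ≤ e * (a * a) * e := by
  refine ha.trans (sup_le ?_ le_rfl)
  calc a * a * e ≤ a * (a * a * e ⊔ e * (a * a) * e) * e := by gcongr
    _ = a * (a * a) * (e * e) ⊔ (a * e) * (a * a) * (e * e) := by
      rw [hld, hrd]; simp only [mul_assoc]
    _ ≤ e * (a * a) * e := sup_le (mul_sq_mul_le he _ _ _) (mul_sq_mul_le he _ _ _)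

end LeSemigroup

/-- Theorem 2: in an le-semigroup, intra-regularity is equivalent to the
bi-ideal-element condition and to the quasi-ideal-element condition. -/
theorem le_intra_regular_tfae {S : Type*} [Semigroup S] [Lattice S]
    (e : S) (he : ∀ a : S, a ≤ e)
    (hld : ∀ a b c : S, a * (b ⊔ c) = a * b ⊔ a * c)
    (hrd : ∀ a b c : S, (a ⊔ b) * c = a * c ⊔ b * c) :
    ((∀ a : S, a ≤ e * (a * a) * e) ↔
      (∀ x y b : S, x * e ≤ x → e * y ≤ y → b * e * b ≤ b →
        x ⊓ b ⊓ y ≤ y * b * x)) ∧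
    ((∀ a : S, a ≤ e * (a * a) * e) ↔
      (∀ x y q : S, x * e ≤ x → e * y ≤ y → q * e ⊓ e * q ≤ q →
        x ⊓ q ⊓ y ≤ y * q * x)) := by
  have := mulLeftMono_of_mul_sup hld
  have := mulRightMono_of_sup_mul hrd
  have intra_bi := LeSemigroup.inf_inf_le_mul_mul_of_intraRegular he
  have bi_quasi : (∀ x y b : S, x * e ≤ x → e * y ≤ y → b * e * b ≤ b →
      x ⊓ b ⊓ y ≤ y * b * x) → ∀ x y q : S, x * e ≤ x → e * y ≤ y → q * e ⊓ e * q ≤ q →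
      x ⊓ q ⊓ y ≤ y * q * x :=
    fun h x y q hx hy hq => h x y q hx hy (LeSemigroup.mul_mul_le_of_mul_inf_mul_le he hq)
  have quasi_intra (h) (a : S) : a ≤ e * (a * a) * e :=
    LeSemigroup.le_mul_sq_mul_of_le_sq_mul_sup he hld hrd
      (LeSemigroup.le_sq_mul_sup_of_inf_inf_le he hld hrd h a)
  exact ⟨⟨intra_bi, quasi_intra ∘ bi_quasi⟩, ⟨bi_quasi ∘ intra_bi, quasi_intra⟩⟩
end
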